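/- For every real m > 0 and every ρ > ρ₊(m), the inequality √(V_m(ρ))/ρ + V_m'(ρ)/(4√(V_m(ρ))) > 3/2 holds; equivalently, β_m(ρ) < 0 for all ρ ∈ (ρ₊(m), ∞). (Equivalently, the denominator 4V_m(ρ) + ρV_m'(ρ) − 6ρ√(V_m(ρ)) appearing in θ_m is strictly positive on (ρ₊(m), ∞).) -/
import Mathlib


noncomputable def Vhp (m ρ : ℝ) : ℝ := ρ ^ 2 + 1 - 2 * m / ρ

noncomputable def Vhp' (m ρ : ℝ) : ℝ := 2 * ρ + 2 * m / ρ ^ 2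

/-- `β_m`, the renormalized self-similar quantity of the Lorentzian Hawking–Page solution. -/
noncomputable def betaHP (m ρ : ℝ) : ℝ :=
  (1 / 3) * (3 / 2 - Real.sqrt (Vhp m ρ) / ρ - Vhp' m ρ / (4 * Real.sqrt (Vhp m ρ)))

/-- For every `m > 0` and every `ρ > ρ₊(m)`,
`√(V_m(ρ))/ρ + V_m'(ρ)/(4√(V_m(ρ))) > 3/2`; equivalently `β_m(ρ) < 0` on `(ρ₊(m), ∞)`;
equivalently the denominator `4V_m(ρ) + ρV_m'(ρ) − 6ρ√(V_m(ρ))` of `θ_m` is strictly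
positive on `(ρ₊(m), ∞)`. -/
theorem betaHP_neg (m : ℝ) (hm : 0 < m) (ρp : ℝ)
    (hρp : 0 < ρp ∧ ρp ^ 3 + ρp - 2 * m = 0) :
    ∀ ρ : ℝ, ρp < ρ →
      3 / 2 < Real.sqrt (Vhp m ρ) / ρ + Vhp' m ρ / (4 * Real.sqrt (Vhp m ρ)) ∧
      betaHP m ρ < 0 ∧
      0 < 4 * Vhp m ρ + ρ * Vhp' m ρ - 6 * ρ * Real.sqrt (Vhp m ρ) := by
  obtain ⟨hρp0, hroot⟩ := hρp
  intro ρ hρ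
  have hρ0 : 0 < ρ := hρp0.trans hρ
  have hρne : ρ ≠ 0 := ne_of_gt hρ0
  have hcube : 0 < ρ ^ 3 + ρ - 2 * m := by
    nlinarith [mul_pos (sub_pos.mpr hρ) (mul_pos hρp0 hρ0), sq_nonneg (ρ + ρp), sq_nonneg (ρ - ρp)]
  have hV : 0 < Vhp m ρ := by
    unfold Vhp
    rw [sub_pos, div_lt_iff₀ hρ0]
    nlinarith
  set s := Real.sqrt (Vhp m ρ) with hs_def
  have hs : 0 < s := Real.sqrt_pos.mpr hV
  have hs2 : s ^ 2 = Vhp m ρ := Real.sq_sqrt hV.le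
  have hρs2 : ρ * s ^ 2 = ρ ^ 3 + ρ - 2 * m := by
    rw [hs2]; unfold Vhp; field_simp
  have hpos : 0 < 6 * ρ ^ 3 + 4 * ρ - 6 * m := by nlinarith [pow_pos hρ0 3]
  have hkey : 6 * ρ ^ 2 * s < 6 * ρ ^ 3 + 4 * ρ - 6 * m := by
    nlinarith [sq_nonneg (3 * m - 2 * ρ), sq_nonneg (ρ ^ 2), mul_pos (mul_pos hρ0 hρ0) hs,
      sq_nonneg (6 * ρ ^ 2 * s - (6 * ρ ^ 3 + 4 * ρ - 6 * m)), mul_pos hρ0 hρ0]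
  have hnum : 0 < 6 * ρ ^ 3 + 4 * ρ - 6 * m - 6 * ρ ^ 2 * s := by linarith
  have h1 : s / ρ + Vhp' m ρ / (4 * s) - 3 / 2
      = (4 * (ρ * s ^ 2) + 2 * ρ ^ 3 + 2 * m - 6 * ρ ^ 2 * s) / (4 * ρ ^ 2 * s) := by
    unfold Vhp'
    field_simp
    ring
  have h1num : 4 * (ρ * s ^ 2) + 2 * ρ ^ 3 + 2 * m - 6 * ρ ^ 2 * s
      = 6 * ρ ^ 3 + 4 * ρ - 6 * m - 6 * ρ ^ 2 * s := by rw [hρs2]; ring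
  have hfrac : 0 < s / ρ + Vhp' m ρ / (4 * s) - 3 / 2 := by
    rw [h1, h1num]
    exact div_pos hnum (by positivity)
  have hineq : 3 / 2 < s / ρ + Vhp' m ρ / (4 * s) := by linarith
  refine ⟨hineq, ?_, ?_⟩
  · unfold betaHP
    rw [← hs_def]
    nlinarith
  · have h3 : 4 * Vhp m ρ + ρ * Vhp' m ρ - 6 * ρ * s
        = (6 * ρ ^ 3 + 4 * ρ - 6 * m - 6 * ρ ^ 2 * s) / ρ := by
      unfold Vhp Vhp'
      field_simp
      ring
    rw [h3]
    exact div_pos hnum hρ0
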